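/- Let $c\colon[0,L]\to[c_{\min},c_{\max}]$ with $0<c_{\min}\le c_{\max}<\infty$, and let $q(t,\cdot)$ be the backward characteristic flow of $\dot q = -P_L(c)(q)$ where $P_L(c)$ is the $L$-periodization. Then for every $x^0\in L^2([0,L])$ and $t\ge 0$, $\frac{c_{\min}}{c_{\max}}\|x^0\|_{L^2([0,L])}^2 \le \int_0^L |P_L(x^0)(q(t,\omega))|^2\,d\omega \le \frac{c_{\max}}{c_{\min}}\|x^0\|_{L^2([0,L])}^2$. -/

import Mathlib

open MeasureTheory

/-- The `L`-periodization operator. -/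
noncomputable def periodize (L : ℝ) (x : ℝ → ℝ) : ℝ → ℝ :=
  fun ω => x (ω - L * ((⌈ω / L⌉ : ℝ) - 1))

lemma periodize_arg_mem {L : ℝ} (hL : 0 < L) (z : ℝ) :
    z - L * ((⌈z / L⌉ : ℝ) - 1) ∈ Set.Ioc (0:ℝ) L := by
  have h1 : (z / L : ℝ) ≤ (⌈z / L⌉ : ℝ) := Int.le_ceil _
  have h2 : ((⌈z / L⌉ : ℤ) : ℝ) < z / L + 1 := Int.ceil_lt_add_one _
  have hz : z = (z / L) * L := by field_simp
  constructor
  · nlinarith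
  · nlinarith

lemma periodize_periodic (L : ℝ) (g : ℝ → ℝ) :
    Function.Periodic (periodize L g) L := by
  intro z
  by_cases hL : L = 0
  · simp [periodize, hL]
  unfold periodize
  congr 1
  have : (z + L) / L = z / L + 1 := by field_simp
  rw [this, Int.ceil_add_one]
  push_cast
  ring

lemma periodize_eq_on_Ioc {L : ℝ} (hL : 0 < L) (g : ℝ → ℝ) {ω : ℝ}
    (hω : ω ∈ Set.Ioc (0:ℝ) L) : periodize L g ω = g ω := by
  unfold periodize
  have h1 : ⌈ω / L⌉ = 1 := by
    rw [Int.ceil_eq_iff]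
    constructor
    · simpa using div_pos hω.1 hL
    · simpa using (div_le_one hL).mpr hω.2
  rw [h1]
  norm_num

lemma measurable_periodize {L : ℝ} {g : ℝ → ℝ} (hg : Measurable g) :
    Measurable (periodize L g) := by
  unfold periodize
  apply hg.comp
  have h1 : Measurable fun ω : ℝ => (⌈ω / L⌉ : ℤ) := (measurable_id.div_const L).ceil
  have h2 : Measurable fun ω : ℝ => ((⌈ω / L⌉ : ℤ) : ℝ) := measurable_from_top.comp h1
  exact measurable_id.sub (measurable_const.mul (h2.sub measurable_const))

set_option maxHeartbeats 1000000 in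
/-- Two-sided bound for the composition with the backward characteristic flow
of `q̇ = -P_L(c)(q)`:
`(c_min/c_max)‖x⁰‖² ≤ ∫₀ᴸ |P_L(x⁰)(q(t,ω))|² dω ≤ (c_max/c_min)‖x⁰‖²`. -/
theorem stmt_12 (L cmin cmax : ℝ) (hL : 0 < L) (hcmin : 0 < cmin) (hcc : cmin ≤ cmax)
    (c : ℝ → ℝ) (hbd : ∀ ω ∈ Set.Icc (0:ℝ) L, cmin ≤ c ω ∧ c ω ≤ cmax)
    (q : ℝ → ℝ → ℝ)
    (hq0 : ∀ ω : ℝ, q 0 ω = ω)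
    (hq : ∀ ω t : ℝ, HasDerivAt (fun s => q s ω) (-(periodize L c (q t ω))) t)
    (x : ℝ → ℝ) (hx : Measurable x) :
    ∀ t : ℝ, 0 ≤ t →
      cmin / cmax * (∫ ω in (0:ℝ)..L, (x ω) ^ 2) ≤
        (∫ ω in (0:ℝ)..L, (periodize L x (q t ω)) ^ 2) ∧
      (∫ ω in (0:ℝ)..L, (periodize L x (q t ω)) ^ 2) ≤
        cmax / cmin * (∫ ω in (0:ℝ)..L, (x ω) ^ 2) := by
  intro t ht
  have hcmax : (0:ℝ) < cmax := lt_of_lt_of_le hcmin hcc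
  set f : ℝ → ℝ := periodize L c with hfdef
  have hfb : ∀ z, cmin ≤ f z ∧ f z ≤ cmax := fun z =>
    hbd _ (Set.Ioc_subset_Icc_self (periodize_arg_mem hL z))
  have hfpos : ∀ z, 0 < f z := fun z => lt_of_lt_of_le hcmin (hfb z).1
  have hfne : ∀ z, f z ≠ 0 := fun z => (hfpos z).ne'
  have hfper : Function.Periodic f L := periodize_periodic L c
  -- the flow starting at 0
  set Q : ℝ → ℝ := fun s => q s 0 with hQdef
  have hQd : ∀ s, HasDerivAt Q (-(f (Q s))) s := fun s => hq 0 s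
  have hQcont : Continuous Q :=
    continuous_iff_continuousAt.mpr (fun u => (hQd u).continuousAt)
  -- growth estimate for surjectivity
  have hgrow : ∀ a b : ℝ, a ≤ b → Q b + cmin * b ≤ Q a + cmin * a := by
    have hanti : Antitone (fun s => Q s + cmin * s) := by
      have hd : ∀ s, HasDerivAt (fun s => Q s + cmin * s) (-(f (Q s)) + cmin * 1) s :=
        fun s => (hQd s).add ((hasDerivAt_id s).const_mul cmin)
      apply antitone_of_deriv_nonpos (fun s => (hd s).differentiableAt)
      intro s
      rw [(hd s).deriv]
      have := (hfb (Q s)).1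
      linarith
    intro a b hab
    exact hanti hab
  have hQsurj : Function.Surjective Q := by
    intro y
    rcases le_or_gt y (Q 0) with hy | hy
    · set b := (Q 0 - y) / cmin with hb
      have hb0 : 0 ≤ b := div_nonneg (by linarith) hcmin.le
      have hcb : cmin * b = Q 0 - y := by
        rw [hb, mul_div_cancel₀ _ hcmin.ne']
      have h1 : Q b ≤ y := by
        have := hgrow 0 b hb0
        simp only [mul_zero, add_zero] at this
        linarith
      obtain ⟨s, _, hs⟩ := intermediate_value_Icc' hb0 hQcont.continuousOn
        (Set.mem_Icc.mpr ⟨h1, hy⟩)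
      exact ⟨s, hs⟩
    · set a := (Q 0 - y) / cmin with ha
      have ha0 : a ≤ 0 := div_nonpos_of_nonpos_of_nonneg (by linarith) hcmin.le
      have hca : cmin * a = Q 0 - y := by
        rw [ha, mul_div_cancel₀ _ hcmin.ne']
      have h1 : y ≤ Q a := by
        have := hgrow a 0 ha0
        simp only [mul_zero, add_zero] at this
        linarith
      obtain ⟨s, _, hs⟩ := intermediate_value_Icc' ha0 hQcont.continuousOn
        (Set.mem_Icc.mpr ⟨hy.le, h1⟩)
      exact ⟨s, hs⟩
  -- the reversed flow is strictly monotone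
  set Qm : ℝ → ℝ := fun s => Q (-s) with hQmdef
  have hQmd : ∀ s, HasDerivAt Qm (-(f (Q (-s))) * (-1)) s := fun s =>
    (hQd (-s)).comp s (hasDerivAt_neg s)
  have hQm_mono : StrictMono Qm := by
    apply strictMono_of_deriv_pos
    intro s
    rw [(hQmd s).deriv]
    have := hfpos (Q (-s))
    nlinarith
  have hQm_surj : Function.Surjective Qm := fun y => by
    obtain ⟨s, hs⟩ := hQsurj y
    exact ⟨-s, by simpa [hQmdef] using hs⟩
  -- the inverse G of Q
  set iso := StrictMono.orderIsoOfSurjective Qm hQm_mono hQm_surj with hisodef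
  set G : ℝ → ℝ := fun z => -(iso.symm z) with hGdef
  have hQG : ∀ z, Q (G z) = z := by
    intro z
    have h1 : Qm (iso.symm z) = z :=
      StrictMono.orderIsoOfSurjective_self_symm_apply Qm hQm_mono hQm_surj z
    simpa [hQmdef, hGdef] using h1
  have hGQ : ∀ s, G (Q s) = s := by
    intro s
    have h0 : Qm (-s) = Q s := by simp [hQmdef]
    have h1 : iso.symm (Qm (-s)) = -s :=
      StrictMono.orderIsoOfSurjective_symm_apply_self Qm hQm_mono hQm_surj (-s)
    rw [h0] at h1
    simp [hGdef, h1]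
  have hGcont : Continuous G := continuous_neg.comp (OrderIso.continuous iso.symm)
  have hGinj : Function.Injective G := by
    intro a b hab
    have : Q (G a) = Q (G b) := by rw [hab]
    rwa [hQG, hQG] at this
  have hGanti : StrictAnti G := by
    intro a b hab
    exact neg_lt_neg (iso.symm.strictMono hab)
  have hGd : ∀ z, HasDerivAt G (-(f z))⁻¹ z := by
    intro z
    have h1 : HasDerivAt Q (-(f z)) (G z) := by
      have := hQd (G z)
      rwa [hQG z] at this
    exact HasDerivAt.of_local_left_inverse hGcont.continuousAt h1
      (by simpa using hfne z) (Filter.Eventually.of_forall hQG)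
  -- the key conjugation identity
  have hGq : ∀ ω s : ℝ, G (q s ω) = G ω + s := by
    intro ω s
    have hd : ∀ u : ℝ, HasDerivAt (fun v => G (q v ω) - v)
        ((-(f (q u ω)))⁻¹ * (-(f (q u ω))) - 1) u := fun u =>
      (((hGd (q u ω)).comp (h := fun v => q v ω) u (hq ω u))).sub (hasDerivAt_id u)
    have hconst : ∀ u v : ℝ, G (q u ω) - u = G (q v ω) - v := by
      apply is_const_of_deriv_eq_zero (fun u => (hd u).differentiableAt)
      intro u
      rw [(hd u).deriv]
      rw [inv_mul_cancel₀ (by simpa using hfne (q u ω))]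
      ring
    have h := hconst s 0
    rw [hq0 ω] at h
    linarith
  -- periodicity of G and of the flow
  have hK : ∀ z, G (z + L) = G z + (G L - G 0) := by
    have hd : ∀ z : ℝ, HasDerivAt (fun w => G (w + L) - G w)
        ((-(f (z + L)))⁻¹ * 1 - (-(f z))⁻¹) z := fun z =>
      (((hGd (z + L)).comp (h := fun w => id w + L) z ((hasDerivAt_id z).add_const L))).sub (hGd z)
    have hconst : ∀ a b : ℝ, G (a + L) - G a = G (b + L) - G b := by
      apply is_const_of_deriv_eq_zero (fun z => (hd z).differentiableAt)
      intro z
      rw [(hd z).deriv, hfper z]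
      ring
    intro z
    have := hconst z 0
    simp only [zero_add] at this
    linarith
  -- the spatial map φ
  set φ : ℝ → ℝ := fun ω => q t ω with hφdef
  have hφmono : StrictMono φ := by
    intro a b hab
    have h1 : G (φ b) < G (φ a) := by
      rw [hφdef]
      simp only
      rw [hGq a t, hGq b t]
      have := hGanti hab
      linarith
    exact (hGanti.lt_iff_gt).mp h1
  have hφ_eq : ∀ ω, φ ω = Q (G ω + t) := by
    intro ω
    apply hGinj
    show G (q t ω) = G (Q (G ω + t))
    rw [hGq ω t, hGQ]
  have hφd : ∀ ω, HasDerivAt φ (f (φ ω) / f ω) ω := by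
    intro ω
    have h1 : HasDerivAt (fun w => G w + t) (-(f ω))⁻¹ ω := (hGd ω).add_const t
    have h2 : HasDerivAt Q (-(f (Q (G ω + t)))) (G ω + t) := hQd _
    have h3 : HasDerivAt (fun w => Q (G w + t)) (-(f (Q (G ω + t))) * (-(f ω))⁻¹) ω :=
      h2.comp (h := fun w => G w + t) ω h1
    have h4 : (fun w => Q (G w + t)) = φ := funext fun w => (hφ_eq w).symm
    rw [h4, ← hφ_eq ω] at h3
    have h5 : -(f (φ ω)) * (-(f ω))⁻¹ = f (φ ω) / f ω := by
      rw [← neg_inv, div_eq_mul_inv]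
      ring
    rwa [h5] at h3
  have hφcont : Continuous φ :=
    continuous_iff_continuousAt.mpr (fun u => (hφd u).continuousAt)
  have hφL : φ L = φ 0 + L := by
    apply hGinj
    have h1 : G (q t L) = G L + t := hGq L t
    have h2 : G (q t 0 + L) = G (q t 0) + (G L - G 0) := hK _
    rw [hφdef]
    simp only
    rw [h1, h2, hGq 0 t]
    have h3 : G L = G (0 + L) := by norm_num
    rw [h3, hK 0]
    ring
  -- image of the base interval
  have himg : φ '' Set.Ioc 0 L = Set.Ioc (φ 0) (φ 0 + L) := by
    rw [← hφL]
    apply Set.Subset.antisymm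
    · rintro _ ⟨w, hw, rfl⟩
      exact ⟨hφmono hw.1, hφmono.monotone hw.2⟩
    · rintro z ⟨hz1, hz2⟩
      obtain ⟨w, hw, rfl⟩ := intermediate_value_Icc hL.le hφcont.continuousOn
        (Set.mem_Icc.mpr ⟨hz1.le, hz2⟩)
      refine ⟨w, ⟨?_, hw.2⟩, rfl⟩
      rcases eq_or_lt_of_le hw.1 with h | h
      · exfalso
        rw [← h] at hz1
        exact lt_irrefl _ hz1
      · exact h
  -- the integrand and its properties
  set h : ℝ → ℝ := fun z => (periodize L x z) ^ 2 with hhdef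
  have hhper : Function.Periodic h L := fun z => by
    simp only [hhdef]
    rw [periodize_periodic L x z]
  have hhm : Measurable h := (measurable_periodize hx).pow_const 2
  have hhnn : ∀ z, 0 ≤ h z := fun z => sq_nonneg _
  have hφmeas : Measurable φ := hφmono.monotone.measurable
  have hcomp_meas : Measurable (fun ω => h (φ ω)) := hhm.comp hφmeas
  -- derivative bounds
  set φ' : ℝ → ℝ := fun ω => f (φ ω) / f ω with hφ'def
  have hφ'meas : Measurable φ' := by
    have : φ' = deriv φ := funext fun ω => ((hφd ω).deriv).symm
    rw [this]
    exact measurable_deriv φ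
  have hr : ∀ ω, cmin / cmax ≤ φ' ω ∧ φ' ω ≤ cmax / cmin := fun ω =>
    ⟨div_le_div₀ (le_trans hcmin.le (hfb _).1) (hfb (φ ω)).1 (hfpos ω) (hfb ω).2,
     div_le_div₀ hcmax.le (hfb (φ ω)).2 hcmin (hfb ω).1⟩
  have hφ'pos : ∀ ω, 0 < φ' ω := fun ω => div_pos (hfpos _) (hfpos _)
  have hφ'abs : ∀ ω, |φ' ω| = φ' ω := fun ω => abs_of_pos (hφ'pos ω)
  -- change of variables
  have hCOV : ∫ z in φ '' Set.Ioc 0 L, h z = ∫ ω in Set.Ioc (0:ℝ) L, |φ' ω| • h (φ ω) :=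
    integral_image_eq_integral_abs_deriv_smul measurableSet_Ioc
      (fun ω _ => (hφd ω).hasDerivWithinAt) (hφmono.injective.injOn) h
  have hIntIff : IntegrableOn h (φ '' Set.Ioc 0 L) ↔
      IntegrableOn (fun ω => |φ' ω| • h (φ ω)) (Set.Ioc (0:ℝ) L) :=
    integrableOn_image_iff_integrableOn_abs_deriv_smul measurableSet_Ioc
      (fun ω _ => (hφd ω).hasDerivWithinAt) (hφmono.injective.injOn) h
  -- periodic shift of the integral
  have hshift : ∫ z in Set.Ioc (φ 0) (φ 0 + L), h z = ∫ z in Set.Ioc (0:ℝ) L, h z := by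
    have h1 := hhper.intervalIntegral_add_eq (φ 0) 0
    rw [intervalIntegral.integral_of_le (by linarith : φ 0 ≤ φ 0 + L),
      intervalIntegral.integral_of_le (by linarith : (0:ℝ) ≤ 0 + L)] at h1
    simpa using h1
  haveI : VAddInvariantMeasure (AddSubgroup.zmultiples L) ℝ volume :=
    ⟨fun c s _ => measure_preimage_add _ _ _⟩
  have hshiftInt : IntegrableOn h (Set.Ioc (φ 0) (φ 0 + L)) ↔
      IntegrableOn h (Set.Ioc (0:ℝ) (0 + L)) := by
    apply IsAddFundamentalDomain.integrableOn_iff (G := AddSubgroup.zmultiples L)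
    exacts [isAddFundamentalDomain_Ioc hL (φ 0), isAddFundamentalDomain_Ioc hL 0,
      hhper.map_vadd_zmultiples]
  -- identify h with x^2 on (0, L]
  have hhx : ∀ ω ∈ Set.Ioc (0:ℝ) L, h ω = x ω ^ 2 := fun ω hω => by
    simp only [hhdef]
    rw [periodize_eq_on_Ioc hL x hω]
  have hsetx : ∫ z in Set.Ioc (0:ℝ) L, h z = ∫ ω in Set.Ioc (0:ℝ) L, x ω ^ 2 :=
    setIntegral_congr_fun measurableSet_Ioc hhx
  have hIntx : IntegrableOn h (Set.Ioc (0:ℝ) L) ↔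
      IntegrableOn (fun ω => x ω ^ 2) (Set.Ioc (0:ℝ) L) := by
    constructor
    · intro H
      exact (integrableOn_congr_fun hhx measurableSet_Ioc).mp H
    · intro H
      exact (integrableOn_congr_fun hhx measurableSet_Ioc).mpr H
  -- rewrite the goal integrals as set integrals
  rw [intervalIntegral.integral_of_le hL.le, intervalIntegral.integral_of_le hL.le]
  have hgoal_eq : (fun ω => (periodize L x (q t ω)) ^ 2) = fun ω => h (φ ω) := rfl
  rw [show (∫ ω in Set.Ioc (0:ℝ) L, (periodize L x (q t ω)) ^ 2) =
      ∫ ω in Set.Ioc (0:ℝ) L, h (φ ω) from rfl]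
  set R : ℝ := cmax / cmin with hRdef
  set r : ℝ := cmin / cmax with hrdef
  have hRpos : 0 < R := div_pos hcmax hcmin
  have hrpos : 0 < r := div_pos hcmin hcmax
  have hrR : r * R = 1 := by
    rw [hrdef, hRdef]
    field_simp
  by_cases hInt : IntegrableOn (fun ω => x ω ^ 2) (Set.Ioc (0:ℝ) L)
  · -- integrable case
    have hIh : IntegrableOn h (Set.Ioc (0:ℝ) L) := hIntx.mpr hInt
    have hIimg : IntegrableOn h (φ '' Set.Ioc 0 L) := by
      rw [himg]
      apply hshiftInt.mpr
      simpa using hIh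
    have hIφ' : IntegrableOn (fun ω => |φ' ω| • h (φ ω)) (Set.Ioc (0:ℝ) L) :=
      hIntIff.mp hIimg
    have hIφ : IntegrableOn (fun ω => h (φ ω)) (Set.Ioc (0:ℝ) L) := by
      apply Integrable.mono' (hIφ'.const_mul R) hcomp_meas.aestronglyMeasurable
      apply Filter.Eventually.of_forall
      intro ω
      rw [Real.norm_eq_abs, abs_of_nonneg (hhnn (φ ω)), smul_eq_mul, hφ'abs ω]
      have h1 := (hr ω).1
      have h2 := hhnn (φ ω)
      have h3 : 1 ≤ R * φ' ω := by
        calc (1:ℝ) = R * r := by rw [mul_comm]; exact hrR.symm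
          _ ≤ R * φ' ω := mul_le_mul_of_nonneg_left h1 hRpos.le
      nlinarith [mul_nonneg (sub_nonneg.mpr h3) h2]
    have hA : ∫ ω in Set.Ioc (0:ℝ) L, |φ' ω| • h (φ ω) =
        ∫ ω in Set.Ioc (0:ℝ) L, x ω ^ 2 := by
      rw [← hCOV, himg, hshift, hsetx]
    constructor
    · -- lower bound
      have hmono : ∫ ω in Set.Ioc (0:ℝ) L, |φ' ω| • h (φ ω) ≤
          ∫ ω in Set.Ioc (0:ℝ) L, R * h (φ ω) := by
        apply integral_mono hIφ' (hIφ.const_mul R)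
        intro ω
        simp only [smul_eq_mul]
        rw [hφ'abs ω]
        exact mul_le_mul_of_nonneg_right (hr ω).2 (hhnn _)
      rw [integral_const_mul] at hmono
      rw [hA] at hmono
      calc r * ∫ ω in Set.Ioc (0:ℝ) L, x ω ^ 2
          ≤ r * (R * ∫ ω in Set.Ioc (0:ℝ) L, h (φ ω)) :=
            mul_le_mul_of_nonneg_left hmono hrpos.le
        _ = ∫ ω in Set.Ioc (0:ℝ) L, h (φ ω) := by rw [← mul_assoc, hrR, one_mul]
    · -- upper bound
      have hmono : ∫ ω in Set.Ioc (0:ℝ) L, r * h (φ ω) ≤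
          ∫ ω in Set.Ioc (0:ℝ) L, |φ' ω| • h (φ ω) := by
        apply integral_mono (hIφ.const_mul r) hIφ'
        intro ω
        simp only [smul_eq_mul]
        rw [hφ'abs ω]
        exact mul_le_mul_of_nonneg_right (hr ω).1 (hhnn _)
      rw [integral_const_mul] at hmono
      rw [hA] at hmono
      calc ∫ ω in Set.Ioc (0:ℝ) L, h (φ ω)
          = R * (r * ∫ ω in Set.Ioc (0:ℝ) L, h (φ ω)) := by
            rw [← mul_assoc, mul_comm R r, hrR, one_mul]
        _ ≤ R * ∫ ω in Set.Ioc (0:ℝ) L, x ω ^ 2 :=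
            mul_le_mul_of_nonneg_left hmono hRpos.le
  · -- non-integrable case: both integrals vanish
    have hIh : ¬ IntegrableOn h (Set.Ioc (0:ℝ) L) := fun H => hInt (hIntx.mp H)
    have hIφ : ¬ IntegrableOn (fun ω => h (φ ω)) (Set.Ioc (0:ℝ) L) := by
      intro H
      have hsm : AEStronglyMeasurable (fun ω => |φ' ω| • h (φ ω))
          (volume.restrict (Set.Ioc (0:ℝ) L)) :=
        ((hφ'meas.abs.mul hcomp_meas).aestronglyMeasurable)
      have hIφ' : IntegrableOn (fun ω => |φ' ω| • h (φ ω)) (Set.Ioc (0:ℝ) L) := by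
        apply Integrable.mono' (H.const_mul R) hsm
        apply Filter.Eventually.of_forall
        intro ω
        rw [Real.norm_eq_abs, smul_eq_mul, abs_of_nonneg
          (mul_nonneg (abs_nonneg _) (hhnn (φ ω))), hφ'abs ω]
        exact mul_le_mul_of_nonneg_right (hr ω).2 (hhnn _)
      have := hIntIff.mpr hIφ'
      rw [himg] at this
      have := hshiftInt.mp this
      simp only [zero_add] at this
      exact hIh this
    rw [integral_undef hInt, integral_undef hIφ]
    simp
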